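/- Let m ≥ 2, α ∈ [0,1], and let P_α be the m×m symmetric-channel matrix with entries (P_α)_{zy} = α·1{z=y} + (1−α)/m. Then for every u ∈ Δ^m, φ(u;P_α) ≤ α log₂ m; in particular the channel capacity satisfies C(P_α) ≤ α log₂ m. -/

import Mathlib

open Finset

/-- The probability simplex Δ^m. -/
def simplex (m : ℕ) : Set (Fin m → ℝ) :=
  {u | (∀ z, 0 ≤ u z) ∧ ∑ z, u z = 1}

/-- Shannon entropy (base 2) of a nonnegative vector, with `0 · log₂ 0 = 0`. -/
noncomputable def entH {m : ℕ} (v : Fin m → ℝ) : ℝ :=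
  ∑ y, -(v y * Real.logb 2 (v y))

/-- The channel function φ(u;P) = h(uᵀP) − ∑_z u_z h(P_z). -/
noncomputable def phi {m : ℕ} (u : Fin m → ℝ) (P : Matrix (Fin m) (Fin m) ℝ) : ℝ :=
  entH (fun y => ∑ z, u z * P z y) - ∑ z, u z * entH (P z)

/-- The channel capacity C(P) = sup_{u ∈ Δ^m} φ(u;P). -/
noncomputable def cap {m : ℕ} (P : Matrix (Fin m) (Fin m) ℝ) : ℝ :=
  sSup ((fun u => phi u P) '' simplex m)

/-- The symmetric noise channel P_α = αI + (1−α)(1/m) e eᵀ. -/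
noncomputable def Psym (m : ℕ) (α : ℝ) : Matrix (Fin m) (Fin m) ℝ :=
  fun z y => α * (if z = y then 1 else 0) + (1 - α) / m

lemma entH_eq {m : ℕ} (v : Fin m → ℝ) :
    entH v = (∑ y, Real.negMulLog (v y)) / Real.log 2 := by
  unfold entH
  rw [Finset.sum_div]
  refine Finset.sum_congr rfl fun y _ => ?_
  rw [Real.negMulLog, Real.logb]
  ring

lemma sum_negMulLog_le {m : ℕ} (v : Fin m → ℝ) (hv : ∀ y, 0 ≤ v y)
    (hs : ∑ y, v y = 1) : ∑ y, Real.negMulLog (v y) ≤ Real.log m := by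
  classical
  set S : Finset (Fin m) := Finset.univ.filter (fun y => v y ≠ 0) with hS
  have hsum : ∑ y ∈ S, v y = 1 := by
    rw [← hs]
    exact Finset.sum_filter_ne_zero _
  have hpos : ∀ y ∈ S, 0 < v y := by
    intro y hy
    rw [hS, Finset.mem_filter] at hy
    exact lt_of_le_of_ne (hv y) (Ne.symm hy.2)
  have hjensen := (strictConcaveOn_log_Ioi.concaveOn).le_map_sum
    (t := S) (w := fun y => v y) (p := fun y => (v y)⁻¹)
    (fun y hy => hv y) hsum (fun y hy => Set.mem_Ioi.mpr (inv_pos.mpr (hpos y hy)))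
  have h1 : ∑ y ∈ S, v y • (v y)⁻¹ = (S.card : ℝ) := by
    rw [Finset.card_eq_sum_ones S]
    push_cast
    refine Finset.sum_congr rfl fun y hy => ?_
    simp [smul_eq_mul, mul_inv_cancel₀ (hpos y hy).ne']
  have h2 : ∑ y, Real.negMulLog (v y) = ∑ y ∈ S, v y • Real.log (v y)⁻¹ := by
    rw [← Finset.sum_filter_of_ne (p := fun y => v y ≠ 0)]
    · refine Finset.sum_congr rfl fun y _ => ?_
      rw [Real.negMulLog, Real.log_inv, smul_eq_mul]
      ring
    · intro y _ h hy
      exact absurd (by simp [hy]) h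
  have hScard : 0 < S.card := by
    rcases Finset.eq_empty_or_nonempty S with h | h
    · rw [h] at hsum; simp at hsum
    · exact Finset.card_pos.mpr h
  have h3 : Real.log (S.card : ℝ) ≤ Real.log m := by
    apply Real.log_le_log (by exact_mod_cast hScard)
    have hcard : S.card ≤ m := by
      have := Finset.card_filter_le Finset.univ (fun y => v y ≠ 0)
      simpa using this
    exact_mod_cast hcard
  calc ∑ y, Real.negMulLog (v y) = ∑ y ∈ S, v y • Real.log (v y)⁻¹ := h2
    _ ≤ Real.log (∑ y ∈ S, v y • (v y)⁻¹) := hjensen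
    _ = Real.log (S.card : ℝ) := by rw [h1]
    _ ≤ Real.log m := h3

lemma entH_le {m : ℕ} (hm : 1 ≤ m) (v : Fin m → ℝ) (hv : ∀ y, 0 ≤ v y)
    (hs : ∑ y, v y = 1) : entH v ≤ Real.logb 2 m := by
  rw [entH_eq, Real.logb]
  exact div_le_div_of_nonneg_right (sum_negMulLog_le v hv hs) (Real.log_pos one_lt_two).le

lemma row_entropy_lb {m : ℕ} (hm : 2 ≤ m) {α : ℝ} (hα : α ∈ Set.Icc (0 : ℝ) 1)
    (z : Fin m) : (1 - α) * Real.logb 2 m ≤ entH (Psym m α z) := by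
  obtain ⟨hα0, hα1⟩ := hα
  have hmpos : (0 : ℝ) < m := by positivity
  have key : ∀ y : Fin m, α * Real.negMulLog (if z = y then 1 else 0)
      + (1 - α) * Real.negMulLog ((m : ℝ)⁻¹) ≤ Real.negMulLog (Psym m α z y) := by
    intro y
    have this : α • Real.negMulLog (if z = y then (1:ℝ) else 0)
        + (1 - α) • Real.negMulLog ((m : ℝ)⁻¹)
        ≤ Real.negMulLog (α • (if z = y then (1:ℝ) else 0) + (1 - α) • (m : ℝ)⁻¹) :=
      Real.concaveOn_negMulLog.2 (by split <;> norm_num)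
        (Set.mem_Ici.mpr (by positivity)) hα0 (by linarith) (by ring)
    simp only [smul_eq_mul] at this
    have heq : Psym m α z y = α * (if z = y then 1 else 0) + (1 - α) * (m : ℝ)⁻¹ := by
      rw [Psym]; ring
    rw [heq]
    exact this
  have hsum : ∑ y, (α * Real.negMulLog (if z = y then 1 else 0)
      + (1 - α) * Real.negMulLog ((m : ℝ)⁻¹)) = (1 - α) * Real.log m := by
    rw [Finset.sum_add_distrib]
    have h1 : ∑ y : Fin m, α * Real.negMulLog (if z = y then (1:ℝ) else 0) = 0 := by
      apply Finset.sum_eq_zero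
      intro y _
      split <;> simp
    have h2 : Real.negMulLog ((m : ℝ)⁻¹) = (m : ℝ)⁻¹ * Real.log m := by
      rw [Real.negMulLog, Real.log_inv]; ring
    rw [h1, Finset.sum_const, Finset.card_univ, Fintype.card_fin, h2, zero_add,
      nsmul_eq_mul]
    have hmne : (m:ℝ) ≠ 0 := hmpos.ne'
    field_simp
  have hle : (1 - α) * Real.log m ≤ ∑ y, Real.negMulLog (Psym m α z y) := by
    rw [← hsum]
    exact Finset.sum_le_sum fun y _ => key y
  rw [entH_eq, Real.logb, ← mul_div_assoc]
  exact div_le_div_of_nonneg_right hle (Real.log_pos one_lt_two).le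

/-- for the symmetric channel P_α, φ(u;P_α) ≤ α log₂ m for every
u ∈ Δ^m, and hence C(P_α) ≤ α log₂ m. -/
theorem symmetric_channel_capacity_upper_bound {m : ℕ} (hm : 2 ≤ m) (α : ℝ)
    (hα : α ∈ Set.Icc (0 : ℝ) 1) :
    (∀ u ∈ simplex m, phi u (Psym m α) ≤ α * Real.logb 2 m) ∧
    cap (Psym m α) ≤ α * Real.logb 2 m := by
  obtain ⟨hα0, hα1⟩ := hα
  have hmpos : (0 : ℝ) < m := by positivity
  have hlogb : 0 ≤ Real.logb 2 m := Real.logb_nonneg one_lt_two (by exact_mod_cast hm.trans' (by norm_num))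
  have main : ∀ u ∈ simplex m, phi u (Psym m α) ≤ α * Real.logb 2 m := by
    intro u hu
    obtain ⟨hu0, hu1⟩ := hu
    have hP0 : ∀ z y, 0 ≤ Psym m α z y := by
      intro z y
      rw [Psym]
      have : (0:ℝ) ≤ (if z = y then (1:ℝ) else 0) := by split <;> norm_num
      have h1 : 0 ≤ (1 - α) / m := div_nonneg (by linarith) hmpos.le
      nlinarith
    have hProw : ∀ z : Fin m, ∑ y, Psym m α z y = 1 := by
      intro z
      simp only [Psym]
      rw [Finset.sum_add_distrib, ← Finset.mul_sum, Finset.sum_ite_eq Finset.univ z,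
        Finset.sum_const, Finset.card_univ, Fintype.card_fin, nsmul_eq_mul]
      simp only [Finset.mem_univ, if_true]
      field_simp
      ring
    -- the output distribution is in the simplex
    have hv0 : ∀ y, 0 ≤ ∑ z, u z * Psym m α z y :=
      fun y => Finset.sum_nonneg fun z _ => mul_nonneg (hu0 z) (hP0 z y)
    have hv1 : ∑ y, ∑ z, u z * Psym m α z y = 1 := by
      rw [Finset.sum_comm]
      calc ∑ z, ∑ y, u z * Psym m α z y = ∑ z, u z * ∑ y, Psym m α z y := by
            simp [Finset.mul_sum]
        _ = ∑ z, u z := by simp [hProw]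
        _ = 1 := hu1
    have h1 : entH (fun y => ∑ z, u z * Psym m α z y) ≤ Real.logb 2 m :=
      entH_le (by omega) _ hv0 hv1
    have h2 : (1 - α) * Real.logb 2 m ≤ ∑ z, u z * entH (Psym m α z) := by
      calc (1 - α) * Real.logb 2 m = ∑ z, u z * ((1 - α) * Real.logb 2 m) := by
            rw [← Finset.sum_mul, hu1, one_mul]
        _ ≤ ∑ z, u z * entH (Psym m α z) :=
            Finset.sum_le_sum fun z _ =>
              mul_le_mul_of_nonneg_left (row_entropy_lb hm ⟨hα0, hα1⟩ z) (hu0 z)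
    rw [phi]
    nlinarith
  refine ⟨main, ?_⟩
  apply Real.sSup_le
  · rintro x ⟨u, hu, rfl⟩
    exact main u hu
  · positivity
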